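/- Let X_1,…,X_m be Hermitian N×N complex matrices, let P be an N×N complex matrix, let S > 0, and let F : ℝ → ℂ be integrable with ∫ F(t) dt = 1 and ∫ |t|·|F(t)| dt < ∞. Suppose ‖[P, X_j]‖ ≤ ε for all j. Define H = S^m ∫_{ℝ^m} (∏_{j=1}^m F(S a_j)) · exp(i Σ_j a_j X_j) P exp(−i Σ_j a_j X_j) da. Then ‖H − P‖ ≤ (m ε / S) · (∫ |t|·|F(t)| dt) · (∫ |F(t)| dt)^{m−1}. -/

import Mathlib

/-!
For self-adjoint `T`, the path `s ↦ exp (i s T) P exp (-i s T)` has derivative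
`exp (i s T) [i T, P] exp (-i s T)`, of norm `‖[P, T]‖` since the outer factors are unitary; hence
conjugation by `exp (i T)` moves `P` by at most `‖[P, T]‖ ≤ ε ∑ |a_j|` when `T = ∑ a_j X_j`.
After the substitution `a = b / S` the weight `∏ F (b_j)` has integral `1`, so `H - P` is the
weighted average of these displacements, and is bounded by
`(ε / S) ∑_j ∫ |b_j| ∏_i |F (b_i)| db = (m ε / S) (∫ |t| |F t| dt) (∫ |F|) ^ (m - 1)` (Fubini).
-/

open MeasureTheory NormedSpace Finset

theorem norm_commutator_sum_smul_le {ι 𝕜 A : Type*} [NormedField 𝕜] [NormedRing A]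
    [NormedAlgebra 𝕜 A] (s : Finset ι) (c : ι → 𝕜) (X : ι → A) (P : A) {ε : ℝ}
    (hPX : ∀ j ∈ s, ‖P * X j - X j * P‖ ≤ ε) :
    ‖P * ∑ j ∈ s, c j • X j - (∑ j ∈ s, c j • X j) * P‖ ≤ ε * ∑ j ∈ s, ‖c j‖ := by
  have hexpand : P * ∑ j ∈ s, c j • X j - (∑ j ∈ s, c j • X j) * P
      = ∑ j ∈ s, c j • (P * X j - X j * P) := by
    simp only [mul_sum, sum_mul, ← sum_sub_distrib, mul_smul_comm, smul_mul_assoc, smul_sub]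
  rw [hexpand, mul_sum]
  refine (norm_sum_le _ _).trans (sum_le_sum fun j hj => ?_)
  rw [norm_smul, mul_comm ε]
  exact mul_le_mul_of_nonneg_left (hPX j hj) (norm_nonneg _)

section ExpConjugation

variable {A : Type*} [CStarAlgebra A]

theorem norm_exp_conj_sub_le_norm_commutator {T : A} (hT : IsSelfAdjoint T) (P : A) :
    ‖exp (Complex.I • T) * P * exp (-(Complex.I • T)) - P‖ ≤ ‖P * T - T * P‖ := by
  let +nondep : NormedAlgebra ℚ A := .restrictScalars ℚ ℂ A
  set B := Complex.I • T
  have hB : B ∈ skewAdjoint A := hT.smul_mem_skewAdjoint Complex.conj_I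
  have hunitary (s : ℝ) : exp (s • B) ∈ unitary A :=
    exp_mem_unitary_of_mem_skewAdjoint (skewAdjoint.smul_mem s hB)
  have hunitary' (s : ℝ) : exp (s • -B) ∈ unitary A :=
    exp_mem_unitary_of_mem_skewAdjoint (skewAdjoint.smul_mem s (neg_mem hB))
  have hderiv (s : ℝ) : HasDerivAt (fun u : ℝ => exp (u • B) * P * exp (u • -B))
      (exp (s • B) * (B * P - P * B) * exp (s • -B)) s := by
    refine (((hasDerivAt_exp_smul_const B s).mul_const P).mul
      (hasDerivAt_exp_smul_const' (-B) s)).congr_deriv ?_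
    noncomm_ring
  have hcomm : B * P - P * B = Complex.I • (T * P - P * T) := by
    rw [smul_sub, smul_mul_assoc, mul_smul_comm]
  have hnorm_deriv (s : ℝ) :
      ‖exp (s • B) * (B * P - P * B) * exp (s • -B)‖ = ‖P * T - T * P‖ := by
    rw [CStarRing.norm_mul_mem_unitary _ (hunitary' s),
      CStarRing.norm_mem_unitary_mul _ (hunitary s), hcomm, norm_smul, Complex.norm_I, one_mul,
      norm_sub_rev]
  simpa using norm_image_sub_le_of_norm_deriv_le_segment_01'
    (fun s _ => (hderiv s).hasDerivWithinAt) (fun s _ => (hnorm_deriv s).le)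

theorem norm_exp_conj_sum_sub_le {ι : Type*} (s : Finset ι) {X : ι → A}
    (hX : ∀ j ∈ s, IsSelfAdjoint (X j)) (P : A) {ε : ℝ}
    (hPX : ∀ j ∈ s, ‖P * X j - X j * P‖ ≤ ε) (a : ι → ℝ) :
    ‖exp (Complex.I • ∑ j ∈ s, (a j : ℂ) • X j) * P
        * exp (-(Complex.I • ∑ j ∈ s, (a j : ℂ) • X j)) - P‖ ≤ ε * ∑ j ∈ s, |a j| := by
  have hT : IsSelfAdjoint (∑ j ∈ s, (a j : ℂ) • X j) :=
    isSelfAdjoint_sum s fun j hj => .smul (Complex.conj_ofReal (a j)) (hX j hj)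
  refine (norm_exp_conj_sub_le_norm_commutator hT P).trans ?_
  simpa only [Complex.norm_real, Real.norm_eq_abs] using
    norm_commutator_sum_smul_le s (fun j => (a j : ℂ)) X P hPX

theorem continuous_exp_conj (P : A) :
    Continuous fun T : A => exp (Complex.I • T) * P * exp (-(Complex.I • T)) := by
  let +nondep : NormedAlgebra ℚ A := .restrictScalars ℚ ℂ A
  fun_prop

end ExpConjugation

section Fubini

variable {ι 𝕜 : Type*} [Fintype ι] [DecidableEq ι] [RCLike 𝕜]

theorem mul_prod_erase_eq_prod_update (g h : ℝ → 𝕜) (j : ι) (b : ι → ℝ) :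
    g (b j) * ∏ i ∈ univ.erase j, h (b i) = ∏ i, Function.update (fun _ => h) j g i (b i) := by
  rw [← mul_prod_erase univ _ (mem_univ j), Function.update_self]
  congr 1
  exact prod_congr rfl fun i hi => by rw [Function.update_of_ne (ne_of_mem_erase hi)]

theorem integrable_apply_mul_prod_erase {g h : ℝ → 𝕜} (hg : Integrable g) (hh : Integrable h)
    (j : ι) : Integrable fun b : ι → ℝ => g (b j) * ∏ i ∈ univ.erase j, h (b i) := by
  simp_rw [mul_prod_erase_eq_prod_update, volume_pi]
  refine Integrable.fintype_prod fun i => ?_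
  rcases eq_or_ne i j with rfl | hij
  · simpa using hg
  · simpa [Function.update_of_ne hij] using hh

theorem integral_apply_mul_prod_erase (g h : ℝ → 𝕜) (j : ι) :
    ∫ b : ι → ℝ, g (b j) * ∏ i ∈ univ.erase j, h (b i)
      = (∫ t, g t) * (∫ t, h t) ^ (Fintype.card ι - 1) := by
  simp_rw [mul_prod_erase_eq_prod_update, volume_pi, integral_fintype_prod_eq_prod,
    ← mul_prod_erase univ _ (mem_univ j), Function.update_self]
  rw [Fintype.card, ← card_erase_of_mem (mem_univ j), ← prod_const]
  congr 1
  exact prod_congr rfl fun i hi => by rw [Function.update_of_ne (ne_of_mem_erase hi)]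

end Fubini

section ProductKernel

variable {ι 𝕜 E : Type*} [Fintype ι] [RCLike 𝕜] [NormedAddCommGroup E] [NormedSpace ℝ E]
  [NormedSpace 𝕜 E] {F : ℝ → 𝕜}

theorem integrable_abs_mul_prod_norm (hF : Integrable F)
    (hFmom : Integrable fun t : ℝ => |t| * ‖F t‖) (j : ι) :
    Integrable fun b : ι → ℝ => |b j| * ∏ i, ‖F (b i)‖ := by
  classical
  simp_rw [← mul_prod_erase univ _ (mem_univ j), ← mul_assoc]
  exact integrable_apply_mul_prod_erase hFmom hF.norm j

theorem integral_abs_mul_prod_norm (F : ℝ → 𝕜) (j : ι) :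
    ∫ b : ι → ℝ, |b j| * ∏ i, ‖F (b i)‖
      = (∫ t, |t| * ‖F t‖) * (∫ t, ‖F t‖) ^ (Fintype.card ι - 1) := by
  classical
  simp_rw [← mul_prod_erase univ _ (mem_univ j), ← mul_assoc]
  exact integral_apply_mul_prod_erase (fun t => |t| * ‖F t‖) (fun t => ‖F t‖) j

theorem norm_integral_prod_smul_sub_le [CompleteSpace E] (hF : Integrable F)
    (hFone : ∫ t, F t = 1) (hFmom : Integrable fun t : ℝ => |t| * ‖F t‖)
    {G : (ι → ℝ) → E} (hG : AEStronglyMeasurable G) (c : E) {C : ℝ}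
    (hGc : ∀ b, ‖G b - c‖ ≤ C * ∑ j, |b j|) :
    ‖(∫ b : ι → ℝ, (∏ j, F (b j)) • G b) - c‖
      ≤ C * (Fintype.card ι * (∫ t, |t| * ‖F t‖) * (∫ t, ‖F t‖) ^ (Fintype.card ι - 1)) := by
  set w : (ι → ℝ) → 𝕜 := fun b => ∏ j, F (b j)
  have hw : Integrable w := by
    rw [volume_pi]; exact Integrable.fintype_prod fun _ => hF
  have hw_one : ∫ b, w b = 1 := by
    rw [volume_pi, integral_fintype_prod_eq_pow, hFone, one_pow]
  have hmajorant : Integrable fun b : ι → ℝ => C * ∑ j, |b j| * ∏ i, ‖F (b i)‖ :=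
    (integrable_finsetSum _ fun j _ => integrable_abs_mul_prod_norm hF hFmom j).const_mul C
  have hpointwise (b : ι → ℝ) : ‖w b • (G b - c)‖ ≤ C * ∑ j, |b j| * ∏ i, ‖F (b i)‖ := by
    rw [norm_smul, norm_prod, ← sum_mul, mul_comm, ← mul_assoc]
    exact mul_le_mul_of_nonneg_right (hGc b) (prod_nonneg fun i _ => norm_nonneg _)
  have hint : Integrable fun b => w b • (G b - c) :=
    hmajorant.mono' (hw.aestronglyMeasurable.smul (hG.sub aestronglyMeasurable_const))
      (ae_of_all _ hpointwise)
  have hcentre : (∫ b, w b • G b) - c = ∫ b, w b • (G b - c) := by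
    have hwG : Integrable fun b => w b • G b :=
      (hint.add (hw.smul_const c)).congr (ae_of_all _ fun b => by simp [smul_sub])
    simp_rw [smul_sub]
    rw [integral_sub hwG (hw.smul_const c), integral_smul_const, hw_one, one_smul]
  calc ‖(∫ b, w b • G b) - c‖
      ≤ ∫ b : ι → ℝ, C * ∑ j, |b j| * ∏ i, ‖F (b i)‖ := by
        rw [hcentre]
        exact norm_integral_le_of_norm_le hmajorant (ae_of_all _ hpointwise)
    _ = _ := by
        rw [integral_const_mul, integral_finsetSum _ fun j _ =>
          integrable_abs_mul_prod_norm hF hFmom j]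
        simp_rw [integral_abs_mul_prod_norm, sum_const, card_univ, nsmul_eq_mul, mul_assoc]

end ProductKernel

theorem pow_finrank_smul_integral_comp_smul {V E : Type*} [NormedAddCommGroup V]
    [NormedSpace ℝ V] [MeasurableSpace V] [BorelSpace V] [FiniteDimensional ℝ V]
    (μ : Measure V) [μ.IsAddHaarMeasure] [NormedAddCommGroup E] [NormedSpace ℝ E]
    (f : V → E) {S : ℝ} (hS : 0 < S) :
    S ^ Module.finrank ℝ V • ∫ x, f (S • x) ∂μ = ∫ x, f x ∂μ := by
  rw [Measure.integral_comp_smul_of_nonneg μ f S (hR := hS.le),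
    smul_inv_smul₀ (pow_ne_zero _ hS.ne')]

theorem stmt9 {N m : ℕ}
    (X : Fin m → (EuclideanSpace ℂ (Fin N) →L[ℂ] EuclideanSpace ℂ (Fin N)))
    (hXsa : ∀ j, IsSelfAdjoint (X j))
    (P : EuclideanSpace ℂ (Fin N) →L[ℂ] EuclideanSpace ℂ (Fin N))
    (S : ℝ) (hS : 0 < S)
    (F : ℝ → ℂ) (hFint : Integrable F)
    (hFone : ∫ t : ℝ, F t = 1)
    (hFmom : Integrable (fun t : ℝ => |t| * ‖F t‖))
    (ε : ℝ) (hPX : ∀ j, ‖P * X j - X j * P‖ ≤ ε) :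
    ‖(S ^ m • ∫ a : Fin m → ℝ, (∏ j, F (S * a j)) •
        (NormedSpace.exp (Complex.I • ∑ j, (a j : ℂ) • X j) * P *
          NormedSpace.exp (-(Complex.I • ∑ j, (a j : ℂ) • X j)))) - P‖
      ≤ (m * ε / S) * (∫ t : ℝ, |t| * ‖F t‖) *
          (∫ t : ℝ, ‖F t‖) ^ (m - 1) := by
  set U : (Fin m → ℝ) → (EuclideanSpace ℂ (Fin N) →L[ℂ] EuclideanSpace ℂ (Fin N)) := fun a =>
    exp (Complex.I • ∑ j, (a j : ℂ) • X j) * P * exp (-(Complex.I • ∑ j, (a j : ℂ) • X j))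
  have hscale : S ^ m • ∫ a, (∏ j, F (S * a j)) • U a
      = ∫ b, (∏ j, F (b j)) • U (S⁻¹ • b) := by
    simpa [inv_smul_smul₀ hS.ne'] using pow_finrank_smul_integral_comp_smul volume
      (fun b : Fin m → ℝ => (∏ j, F (b j)) • U (S⁻¹ • b)) hS
  have hU (b : Fin m → ℝ) : ‖U (S⁻¹ • b) - P‖ ≤ ε / S * ∑ j, |b j| := by
    refine (norm_exp_conj_sum_sub_le univ (fun j _ => hXsa j) P (fun j _ => hPX j) _).trans_eq ?_
    simp [abs_mul, abs_of_pos hS, mul_sum, div_eq_mul_inv, mul_assoc]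
  have hUcont : Continuous fun b : Fin m → ℝ => U (S⁻¹ • b) :=
    (continuous_exp_conj P).comp (by fun_prop)
  rw [hscale]
  calc _ ≤ ε / S * (m * (∫ t, |t| * ‖F t‖) * (∫ t, ‖F t‖) ^ (m - 1)) := by
        simpa only [Fintype.card_fin] using
          norm_integral_prod_smul_sub_le hFint hFone hFmom hUcont.aestronglyMeasurable P hU
    _ = _ := by ring
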